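/- Let m ≥ 1 and let π₁, π₂, π₃, π₄, π₅ be permutations of Fin m. Assume the full colour set T = {1,2,3,4,5} satisfies the Euler–Poincaré relation 2m + κ^{(2)}_T + κ^{(4)}_T = 5m + κ^{(3)}_T + 2·κ_T. Then there exist three pairwise distinct indices i, j, k ∈ {1,2,3,4,5} such that 10·κ_{{i,j}} ≤ 10·κ_{{i,j,k}} + 3m (that is, κ_{{i,j}} − κ_{{i,j,k}} ≤ 3n/20 where n = 2m is the number of simplices). -/
import Mathlib


/-- `kappa π S` is the number of orbits on `Fin m` of the subgroup of `Equiv.Perm (Fin m)`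
generated by the permutations `(π i)⁻¹ * π j` for colours `i, j ∈ S`; it equals the number of
connected components of the subgraph of the colourful graph using only the colours in `S`. -/
noncomputable def kappa {m : ℕ} {ι : Type*}
    (π : ι → Equiv.Perm (Fin m)) (S : Finset ι) : ℕ :=
  Nat.card (MulAction.orbitRel.Quotient
    (↥(Subgroup.closure {g : Equiv.Perm (Fin m) | ∃ i ∈ S, ∃ j ∈ S, g = (π i)⁻¹ * π j}))
    (Fin m))

/-- The set of colours `{i, j, k}` is planar:
`κ_{i,j} + κ_{j,k} + κ_{i,k} = 2·κ_{i,j,k} + m`. -/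
noncomputable def IsPlanar {m : ℕ} {ι : Type*} [DecidableEq ι]
    (π : ι → Equiv.Perm (Fin m)) (i j k : ι) : Prop :=
  kappa π {i, j} + kappa π {j, k} + kappa π {i, k} = 2 * kappa π {i, j, k} + m

lemma kappa_mono {m : ℕ} {ι : Type*} (π : ι → Equiv.Perm (Fin m)) {S S' : Finset ι}
    (h : S ⊆ S') : kappa π S' ≤ kappa π S := by
  set H := Subgroup.closure {g : Equiv.Perm (Fin m) | ∃ i ∈ S, ∃ j ∈ S, g = (π i)⁻¹ * π j} with hH
  set K := Subgroup.closure {g : Equiv.Perm (Fin m) | ∃ i ∈ S', ∃ j ∈ S', g = (π i)⁻¹ * π j} with hK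
  have hHK : H ≤ K := Subgroup.closure_mono
    (fun g hg => by obtain ⟨i, hi, j, hj, hgij⟩ := hg; exact ⟨i, h hi, j, h hj, hgij⟩)
  have hsurj : Function.Surjective
      (Quotient.map' (fun a : Fin m => a)
        (fun a b hab => by
          obtain ⟨g, hg⟩ := hab
          exact ⟨⟨g.1, hHK g.2⟩, hg⟩ :
          ∀ a b, (MulAction.orbitRel H (Fin m)) a b → (MulAction.orbitRel K (Fin m)) a b)) := by
    intro q
    refine Quotient.inductionOn' q fun a => ⟨Quotient.mk'' a, rfl⟩
  exact Nat.card_le_card_of_surjective _ hsurj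

/-- If the 5 colours satisfy the Euler–Poincaré relation
`2m + κ⁽²⁾ + κ⁽⁴⁾ = 5m + κ⁽³⁾ + 2·κ`, then there are three pairwise distinct colours
`i, j, k` with `10·κ_{i,j} ≤ 10·κ_{i,j,k} + 3m`, i.e. `κ_{i,j} − κ_{i,j,k} ≤ 3n/20`. -/
theorem stmt_2 (m : ℕ) (hm : 1 ≤ m) (π₁ π₂ π₃ π₄ π₅ : Equiv.Perm (Fin m))
    (hEP : 2 * m
        + (∑ S ∈ Finset.powersetCard 2 (Finset.univ : Finset (Fin 5)),
            kappa ![π₁, π₂, π₃, π₄, π₅] S)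
        + (∑ S ∈ Finset.powersetCard 4 (Finset.univ : Finset (Fin 5)),
            kappa ![π₁, π₂, π₃, π₄, π₅] S)
      = 5 * m
        + (∑ S ∈ Finset.powersetCard 3 (Finset.univ : Finset (Fin 5)),
            kappa ![π₁, π₂, π₃, π₄, π₅] S)
        + 2 * kappa ![π₁, π₂, π₃, π₄, π₅] (Finset.univ : Finset (Fin 5))) :
    ∃ i j k : Fin 5, i ≠ j ∧ j ≠ k ∧ i ≠ k ∧
      10 * kappa ![π₁, π₂, π₃, π₄, π₅] {i, j}
        ≤ 10 * kappa ![π₁, π₂, π₃, π₄, π₅] {i, j, k} + 3 * m := by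
  set π := ![π₁, π₂, π₃, π₄, π₅] with hπ
  set f := kappa π with hf
  have e2 : ∑ S ∈ Finset.powersetCard 2 (Finset.univ : Finset (Fin 5)), f S
      = f {0,1} + f {0,2} + f {0,3} + f {0,4} + f {1,2} + f {1,3} + f {1,4}
        + f {2,3} + f {2,4} + f {3,4} := by
    rw [show Finset.powersetCard 2 (Finset.univ : Finset (Fin 5))
        = ({{0,1},{0,2},{0,3},{0,4},{1,2},{1,3},{1,4},{2,3},{2,4},{3,4}} :
          Finset (Finset (Fin 5))) from by decide]
    simp (config := { decide := true }) only [Finset.sum_insert, Finset.sum_singleton,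
      Finset.mem_insert, Finset.mem_singleton]
    ring
  have e3 : ∑ S ∈ Finset.powersetCard 3 (Finset.univ : Finset (Fin 5)), f S
      = f {0,1,2} + f {0,1,3} + f {0,1,4} + f {0,2,3} + f {0,2,4} + f {0,3,4}
        + f {1,2,3} + f {1,2,4} + f {1,3,4} + f {2,3,4} := by
    rw [show Finset.powersetCard 3 (Finset.univ : Finset (Fin 5))
        = ({{0,1,2},{0,1,3},{0,1,4},{0,2,3},{0,2,4},{0,3,4},{1,2,3},{1,2,4},{1,3,4},{2,3,4}} :
          Finset (Finset (Fin 5))) from by decide]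
    simp (config := { decide := true }) only [Finset.sum_insert, Finset.sum_singleton,
      Finset.mem_insert, Finset.mem_singleton]
    ring
  have e4 : ∑ S ∈ Finset.powersetCard 4 (Finset.univ : Finset (Fin 5)), f S
      = f {0,1,2,3} + f {0,1,2,4} + f {0,1,3,4} + f {0,2,3,4} + f {1,2,3,4} := by
    rw [show Finset.powersetCard 4 (Finset.univ : Finset (Fin 5))
        = ({{0,1,2,3},{0,1,2,4},{0,1,3,4},{0,2,3,4},{1,2,3,4}} :
          Finset (Finset (Fin 5))) from by decide]
    simp (config := { decide := true }) only [Finset.sum_insert, Finset.sum_singleton,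
      Finset.mem_insert, Finset.mem_singleton]
    ring
  rw [e2, e3, e4] at hEP
  -- monotonicity for the five 4-sets
  have m1 : f Finset.univ ≤ f {0,1,2,3} := kappa_mono π (by decide)
  have m2 : f Finset.univ ≤ f {0,1,2,4} := kappa_mono π (by decide)
  have m3 : f Finset.univ ≤ f {0,1,3,4} := kappa_mono π (by decide)
  have m4 : f Finset.univ ≤ f {0,2,3,4} := kappa_mono π (by decide)
  have m5 : f Finset.univ ≤ f {1,2,3,4} := kappa_mono π (by decide)
  by_contra hcon
  push_neg at hcon
  have h012 := hcon 0 1 2 (by decide) (by decide) (by decide)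
  have h120 := hcon 1 2 0 (by decide) (by decide) (by decide)
  have h021 := hcon 0 2 1 (by decide) (by decide) (by decide)
  have h013 := hcon 0 1 3 (by decide) (by decide) (by decide)
  have h130 := hcon 1 3 0 (by decide) (by decide) (by decide)
  have h031 := hcon 0 3 1 (by decide) (by decide) (by decide)
  have h014 := hcon 0 1 4 (by decide) (by decide) (by decide)
  have h140 := hcon 1 4 0 (by decide) (by decide) (by decide)
  have h041 := hcon 0 4 1 (by decide) (by decide) (by decide)
  have h023 := hcon 0 2 3 (by decide) (by decide) (by decide)
  have h230 := hcon 2 3 0 (by decide) (by decide) (by decide)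
  have h032 := hcon 0 3 2 (by decide) (by decide) (by decide)
  have h024 := hcon 0 2 4 (by decide) (by decide) (by decide)
  have h240 := hcon 2 4 0 (by decide) (by decide) (by decide)
  have h042 := hcon 0 4 2 (by decide) (by decide) (by decide)
  have h034 := hcon 0 3 4 (by decide) (by decide) (by decide)
  have h340 := hcon 3 4 0 (by decide) (by decide) (by decide)
  have h043 := hcon 0 4 3 (by decide) (by decide) (by decide)
  have h123 := hcon 1 2 3 (by decide) (by decide) (by decide)
  have h231 := hcon 2 3 1 (by decide) (by decide) (by decide)
  have h132 := hcon 1 3 2 (by decide) (by decide) (by decide)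
  have h124 := hcon 1 2 4 (by decide) (by decide) (by decide)
  have h241 := hcon 2 4 1 (by decide) (by decide) (by decide)
  have h142 := hcon 1 4 2 (by decide) (by decide) (by decide)
  have h134 := hcon 1 3 4 (by decide) (by decide) (by decide)
  have h341 := hcon 3 4 1 (by decide) (by decide) (by decide)
  have h143 := hcon 1 4 3 (by decide) (by decide) (by decide)
  have h234 := hcon 2 3 4 (by decide) (by decide) (by decide)
  have h342 := hcon 3 4 2 (by decide) (by decide) (by decide)
  have h243 := hcon 2 4 3 (by decide) (by decide) (by decide)
  -- normalise triple sets
  rw [show ({1,2,0} : Finset (Fin 5)) = {0,1,2} from by decide] at h120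
  rw [show ({0,2,1} : Finset (Fin 5)) = {0,1,2} from by decide] at h021
  rw [show ({1,3,0} : Finset (Fin 5)) = {0,1,3} from by decide] at h130
  rw [show ({0,3,1} : Finset (Fin 5)) = {0,1,3} from by decide] at h031
  rw [show ({1,4,0} : Finset (Fin 5)) = {0,1,4} from by decide] at h140
  rw [show ({0,4,1} : Finset (Fin 5)) = {0,1,4} from by decide] at h041
  rw [show ({2,3,0} : Finset (Fin 5)) = {0,2,3} from by decide] at h230
  rw [show ({0,3,2} : Finset (Fin 5)) = {0,2,3} from by decide] at h032
  rw [show ({2,4,0} : Finset (Fin 5)) = {0,2,4} from by decide] at h240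
  rw [show ({0,4,2} : Finset (Fin 5)) = {0,2,4} from by decide] at h042
  rw [show ({3,4,0} : Finset (Fin 5)) = {0,3,4} from by decide] at h340
  rw [show ({0,4,3} : Finset (Fin 5)) = {0,3,4} from by decide] at h043
  rw [show ({2,3,1} : Finset (Fin 5)) = {1,2,3} from by decide] at h231
  rw [show ({1,3,2} : Finset (Fin 5)) = {1,2,3} from by decide] at h132
  rw [show ({2,4,1} : Finset (Fin 5)) = {1,2,4} from by decide] at h241
  rw [show ({1,4,2} : Finset (Fin 5)) = {1,2,4} from by decide] at h142
  rw [show ({3,4,1} : Finset (Fin 5)) = {1,3,4} from by decide] at h341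
  rw [show ({1,4,3} : Finset (Fin 5)) = {1,3,4} from by decide] at h143
  rw [show ({3,4,2} : Finset (Fin 5)) = {2,3,4} from by decide] at h342
  rw [show ({2,4,3} : Finset (Fin 5)) = {2,3,4} from by decide] at h243
  omega
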